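/- Let I ⊆ ℝ be an open interval, let H : I → ℝ be six times differentiable with H'' nowhere vanishing, and let Ω : I → ℝ be four times differentiable and nowhere vanishing. Define b₁ = 10(H'')²Ω''Ω − 20(H'')²(Ω')² − 10H''H'''ΩΩ' + 3H''H''''Ω² − 5(H''')²Ω², and b₂ = (−(H'')³H⁽⁶⁾ + 8(H'')²H'''H⁽⁵⁾ + 8(H'')²(H'''')² − 43H''(H''')²H'''' + 30(H''')⁴)Ω⁴ + (−4(H'')²Ω'''' + 14H''H'''Ω''' + 26H''H''''Ω'' − 50(H''')²Ω'')(H'')²Ω³ + (4(H'')²H⁽⁵⁾ − 40H''H'''H'''' + 50(H''')³)H''Ω'Ω³ + 38(H'')⁴(Ω'')²Ω² + (24(H'')²Ω'Ω''' − 98H''H'''Ω'Ω'' − 44H''H''''(Ω')² + 100(H''')²(Ω')²)(H'')²Ω² − 40(4H''Ω'' − 3H'''Ω')(H'')³(Ω')²Ω + 120(H'')⁴(Ω')⁴. If b₁ vanishes identically on I, then b₂ vanishes identically on I if and only if H satisfies Noth's equation 10(H'')³H⁽⁶⁾ − 70(H'')²H'''H⁽⁵⁾ − 49(H'')²(H'''')²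 + 280H''(H''')²H'''' − 175(H''')⁴ = 0 on I. -/

import Mathlib

noncomputable section

/-- `D f n x` is the `n`-th derivative of `f` at `x`. -/
def D (f : ℝ → ℝ) (n : ℕ) : ℝ → ℝ := iteratedDeriv n f

/-- `b₁ = 10(H'')²Ω''Ω − 20(H'')²(Ω')² − 10H''H'''ΩΩ' + 3H''H''''Ω² − 5(H''')²Ω²`. -/
def b₁ (H Ω : ℝ → ℝ) (x : ℝ) : ℝ :=
  10 * (D H 2 x) ^ 2 * D Ω 2 x * Ω x
    - 20 * (D H 2 x) ^ 2 * (D Ω 1 x) ^ 2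
    - 10 * D H 2 x * D H 3 x * Ω x * D Ω 1 x
    + 3 * D H 2 x * D H 4 x * (Ω x) ^ 2
    - 5 * (D H 3 x) ^ 2 * (Ω x) ^ 2

/-- The expression `b₂` from the flat-Cartan coframe computation. -/
def b₂ (H Ω : ℝ → ℝ) (x : ℝ) : ℝ :=
  (-(D H 2 x) ^ 3 * D H 6 x + 8 * (D H 2 x) ^ 2 * D H 3 x * D H 5 x
      + 8 * (D H 2 x) ^ 2 * (D H 4 x) ^ 2 - 43 * D H 2 x * (D H 3 x) ^ 2 * D H 4 x
      + 30 * (D H 3 x) ^ 4) * (Ω x) ^ 4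
    + (-4 * (D H 2 x) ^ 2 * D Ω 4 x + 14 * D H 2 x * D H 3 x * D Ω 3 x
        + 26 * D H 2 x * D H 4 x * D Ω 2 x - 50 * (D H 3 x) ^ 2 * D Ω 2 x)
        * (D H 2 x) ^ 2 * (Ω x) ^ 3
    + (4 * (D H 2 x) ^ 2 * D H 5 x - 40 * D H 2 x * D H 3 x * D H 4 x
        + 50 * (D H 3 x) ^ 3) * D H 2 x * D Ω 1 x * (Ω x) ^ 3
    + 38 * (D H 2 x) ^ 4 * (D Ω 2 x) ^ 2 * (Ω x) ^ 2
    + (24 * (D H 2 x) ^ 2 * D Ω 1 x * D Ω 3 x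
        - 98 * D H 2 x * D H 3 x * D Ω 1 x * D Ω 2 x
        - 44 * D H 2 x * D H 4 x * (D Ω 1 x) ^ 2
        + 100 * (D H 3 x) ^ 2 * (D Ω 1 x) ^ 2) * (D H 2 x) ^ 2 * (Ω x) ^ 2
    - 40 * (4 * D H 2 x * D Ω 2 x - 3 * D H 3 x * D Ω 1 x)
        * (D H 2 x) ^ 3 * (D Ω 1 x) ^ 2 * Ω x
    + 120 * (D H 2 x) ^ 4 * (D Ω 1 x) ^ 4


/-- The formal first derivative of `b₁` along the curve. -/
def c₁ (H Ω : ℝ → ℝ) (x : ℝ) : ℝ :=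
  (-7) * D H 3 x * D H 4 x * (Ω x) ^ 2
    + (-20) * (D H 3 x) ^ 2 * Ω x * D Ω 1 x
    + 3 * D H 2 x * D H 5 x * (Ω x) ^ 2
    + (-4) * D H 2 x * D H 4 x * Ω x * D Ω 1 x
    + (-50) * D H 2 x * D H 3 x * (D Ω 1 x) ^ 2
    + 10 * D H 2 x * D H 3 x * Ω x * D Ω 2 x
    + (-30) * (D H 2 x) ^ 2 * D Ω 1 x * D Ω 2 x
    + 10 * (D H 2 x) ^ 2 * Ω x * D Ω 3 x

lemma hasDerivAt_D (f : ℝ → ℝ) (n : ℕ) (x : ℝ)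
    (h : DifferentiableAt ℝ (iteratedDeriv n f) x) :
    HasDerivAt (D f n) (D f (n + 1) x) x := by
  have h2 := h.hasDerivAt
  simp only [D, iteratedDeriv_succ]
  exact h2

/-- If `b₁ ≡ 0` on the open interval `I` (the Ricci-flatness condition for
the conformal factor `Ω`), then `b₂ ≡ 0` on `I` iff `H` satisfies Noth's equation
`10(H'')³H⁽⁶⁾ − 70(H'')²H'''H⁽⁵⁾ − 49(H'')²(H'''')² + 280H''(H''')²H'''' − 175(H''')⁴ = 0`
on `I`. -/
theorem b2_vanishes_iff_noth
    (I : Set ℝ) (hIopen : IsOpen I) (hIint : I.OrdConnected)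
    (H Ω : ℝ → ℝ)
    (hH : ∀ i < 6, ∀ x ∈ I, DifferentiableAt ℝ (iteratedDeriv i H) x)
    (hΩ : ∀ i < 4, ∀ x ∈ I, DifferentiableAt ℝ (iteratedDeriv i Ω) x)
    (hH2 : ∀ x ∈ I, D H 2 x ≠ 0)
    (hΩ0 : ∀ x ∈ I, Ω x ≠ 0)
    (hb₁ : ∀ x ∈ I, b₁ H Ω x = 0) :
    (∀ x ∈ I, b₂ H Ω x = 0) ↔
    (∀ x ∈ I,
        10 * (D H 2 x) ^ 3 * D H 6 x
          - 70 * (D H 2 x) ^ 2 * D H 3 x * D H 5 x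
          - 49 * (D H 2 x) ^ 2 * (D H 4 x) ^ 2
          + 280 * D H 2 x * (D H 3 x) ^ 2 * D H 4 x
          - 175 * (D H 3 x) ^ 4 = 0) := by
  have key : ∀ x ∈ I, 50 * b₂ H Ω x = (Ω x) ^ 4 *
      (10 * (D H 2 x) ^ 3 * D H 6 x
        - 70 * (D H 2 x) ^ 2 * D H 3 x * D H 5 x
        - 49 * (D H 2 x) ^ 2 * (D H 4 x) ^ 2
        + 280 * D H 2 x * (D H 3 x) ^ 2 * D H 4 x
        - 175 * (D H 3 x) ^ 4) := by
    have L1 : ∀ x ∈ I, c₁ H Ω x = 0 := by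
      intro x hx
      have hA2 : HasDerivAt (D H 2) (D H 3 x) x :=
        hasDerivAt_D H 2 x (hH 2 (by norm_num) x hx)
      have hA3 : HasDerivAt (D H 3) (D H 4 x) x :=
        hasDerivAt_D H 3 x (hH 3 (by norm_num) x hx)
      have hO0 : HasDerivAt Ω (D Ω 1 x) x := by
        have h := hasDerivAt_D Ω 0 x (hΩ 0 (by norm_num) x hx)
        rwa [show D Ω 0 = Ω from iteratedDeriv_zero] at h
      have hO1 : HasDerivAt (D Ω 1) (D Ω 2 x) x :=
        hasDerivAt_D Ω 1 x (hΩ 1 (by norm_num) x hx)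
      have hO2 : HasDerivAt (D Ω 2) (D Ω 3 x) x :=
        hasDerivAt_D Ω 2 x (hΩ 2 (by norm_num) x hx)
      have T1 := (((hA2.pow 2).const_mul (10 : ℝ)).mul hO2).mul hO0
      have T2 := ((hA2.pow 2).const_mul (20 : ℝ)).mul (hO1.pow 2)
      have T3 := (((hA2.const_mul (10 : ℝ)).mul hA3).mul hO0).mul hO1
      have hA4 : HasDerivAt (D H 4) (D H 5 x) x :=
        hasDerivAt_D H 4 x (hH 4 (by norm_num) x hx)
      have T4 := ((hA2.const_mul (3 : ℝ)).mul hA4).mul (hO0.pow 2)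
      have T5 := ((hA3.pow 2).const_mul (5 : ℝ)).mul (hO0.pow 2)
      have t : HasDerivAt (b₁ H Ω) _ x := (((T1.sub T2).sub T3).add T4).sub T5
      have hev : b₁ H Ω =ᶠ[nhds x] fun _ => (0 : ℝ) :=
        Filter.eventuallyEq_of_mem (hIopen.mem_nhds hx) fun y hy => hb₁ y hy
      have hzero : HasDerivAt (b₁ H Ω) 0 x :=
        (hasDerivAt_const x (0 : ℝ)).congr_of_eventuallyEq hev
      have hval := t.unique hzero
      simp only [Pi.mul_apply, Pi.pow_apply, Nat.cast_ofNat, Nat.reduceSub, pow_one] at hval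
      simp only [c₁]
      linear_combination hval
    intro x hx
    have hA2 : HasDerivAt (D H 2) (D H 3 x) x :=
      hasDerivAt_D H 2 x (hH 2 (by norm_num) x hx)
    have hA3 : HasDerivAt (D H 3) (D H 4 x) x :=
      hasDerivAt_D H 3 x (hH 3 (by norm_num) x hx)
    have hA4 : HasDerivAt (D H 4) (D H 5 x) x :=
      hasDerivAt_D H 4 x (hH 4 (by norm_num) x hx)
    have hA5 : HasDerivAt (D H 5) (D H 6 x) x :=
      hasDerivAt_D H 5 x (hH 5 (by norm_num) x hx)
    have hO0 : HasDerivAt Ω (D Ω 1 x) x := by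
      have h := hasDerivAt_D Ω 0 x (hΩ 0 (by norm_num) x hx)
      rwa [show D Ω 0 = Ω from iteratedDeriv_zero] at h
    have hO1 : HasDerivAt (D Ω 1) (D Ω 2 x) x :=
      hasDerivAt_D Ω 1 x (hΩ 1 (by norm_num) x hx)
    have hO2 : HasDerivAt (D Ω 2) (D Ω 3 x) x :=
      hasDerivAt_D Ω 2 x (hΩ 2 (by norm_num) x hx)
    have hO3 : HasDerivAt (D Ω 3) (D Ω 4 x) x :=
      hasDerivAt_D Ω 3 x (hΩ 3 (by norm_num) x hx)
    have u1 := ((hA3.const_mul ((-7) : ℝ)).mul hA4).mul (hO0.pow 2)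
    have u2 := (((hA3.pow 2).const_mul ((-20) : ℝ)).mul hO0).mul hO1
    have u3 := ((hA2.const_mul ((3) : ℝ)).mul hA5).mul (hO0.pow 2)
    have u4 := (((hA2.const_mul ((-4) : ℝ)).mul hA4).mul hO0).mul hO1
    have u5 := ((hA2.const_mul ((-50) : ℝ)).mul hA3).mul (hO1.pow 2)
    have u6 := (((hA2.const_mul ((10) : ℝ)).mul hA3).mul hO0).mul hO2
    have u7 := (((hA2.pow 2).const_mul ((-30) : ℝ)).mul hO1).mul hO2
    have u8 := (((hA2.pow 2).const_mul ((10) : ℝ)).mul hO0).mul hO3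
    have t2 : HasDerivAt (c₁ H Ω) _ x :=
      ((((((u1.add u2).add u3).add u4).add u5).add u6).add u7).add u8
    have hev1 : c₁ H Ω =ᶠ[nhds x] fun _ => (0 : ℝ) :=
      Filter.eventuallyEq_of_mem (hIopen.mem_nhds hx) fun y hy => L1 y hy
    have hzero1 : HasDerivAt (c₁ H Ω) 0 x :=
      (hasDerivAt_const x (0 : ℝ)).congr_of_eventuallyEq hev1
    have hc2 := t2.unique hzero1
    simp only [Pi.mul_apply, Pi.pow_apply, Nat.cast_ofNat, Nat.reduceSub, pow_one] at hc2
    have hc1 := L1 x hx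
    simp only [c₁] at hc1
    have hb1x := hb₁ x hx
    simp only [b₁] at hb1x
    simp only [b₂]
    linear_combination
      (130 * (D H 2 x) ^ 2 * Ω x * D Ω 2 x + 103 * D H 2 x * D H 4 x * (Ω x) ^ 2
        - 335 * (D H 3 x) ^ 2 * (Ω x) ^ 2 - 350 * D H 2 x * D H 3 x * Ω x * D Ω 1 x
        - 300 * (D H 2 x) ^ 2 * (D Ω 1 x) ^ 2) * hb1x
      + (130 * D H 2 x * D H 3 x * (Ω x) ^ 2 + 80 * (D H 2 x) ^ 2 * Ω x * D Ω 1 x) * hc1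
      + (-20 * (D H 2 x) ^ 2 * (Ω x) ^ 2) * hc2
  constructor
  · intro h x hx
    have hk := key x hx
    rw [h x hx] at hk
    have hw : (Ω x) ^ 4 ≠ 0 := pow_ne_zero 4 (hΩ0 x hx)
    have : (Ω x) ^ 4 * (10 * (D H 2 x) ^ 3 * D H 6 x
        - 70 * (D H 2 x) ^ 2 * D H 3 x * D H 5 x
        - 49 * (D H 2 x) ^ 2 * (D H 4 x) ^ 2
        + 280 * D H 2 x * (D H 3 x) ^ 2 * D H 4 x
        - 175 * (D H 3 x) ^ 4) = 0 := by linarith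
    exact (mul_eq_zero.mp this).resolve_left hw
  · intro h x hx
    have hk := key x hx
    rw [h x hx] at hk
    linarith

end
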